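/- Let ρ : ℝ² → [0,∞) be measurable, bounded, integrable and compactly supported, and define E(x) = ∫_{ℝ²} ((x−y)/|x−y|²) ρ(y) dy. Then for every smooth compactly supported Φ : ℝ² → ℝ, ∫_{ℝ²} ρ(x) ∇Φ(x) · E^⊥(x) dx = ∫_{ℝ²}∫_{ℝ²} H_Φ(x,y) ρ(x) ρ(y) dx dy, where H_Φ(x,y) = (1/2)((x−y)^⊥/|x−y|²)·(∇Φ(x) − ∇Φ(y)) for x ≠ y. -/

import Mathlib

open MeasureTheory

noncomputable abbrev R2 : Type := EuclideanSpace ℝ (Fin 2)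

/-- For `w = (w₁, w₂) ∈ ℝ²`, `perp w = (−w₂, w₁)`. -/
noncomputable def perp (w : R2) : R2 := !₂[-w 1, w 0]

noncomputable def perpL : R2 →L[ℝ] R2 :=
  LinearMap.toContinuousLinearMap
  { toFun := perp
    map_add' := by
      intro a b
      ext i
      fin_cases i <;> simp [perp] <;> ring
    map_smul' := by
      intro c a
      ext i
      fin_cases i <;> simp [perp] <;> ring }

lemma perpL_apply (w : R2) : perpL w = perp w := rfl

lemma perp_apply_zero (w : R2) : perp w 0 = -w 1 := rfl
lemma perp_apply_one (w : R2) : perp w 1 = w 0 := rfl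

lemma norm_perp (w : R2) : ‖perp w‖ = ‖w‖ := by
  rw [EuclideanSpace.norm_eq, EuclideanSpace.norm_eq]
  simp [Fin.sum_univ_two, perp_apply_zero, perp_apply_one]
  ring_nf

noncomputable def Kk (x y : R2) : R2 := (‖x - y‖ ^ 2)⁻¹ • perp (x - y)

lemma norm_Kk (x y : R2) : ‖Kk x y‖ = ‖x - y‖⁻¹ := by
  rcases eq_or_ne (x - y) 0 with h | h
  · have hp : perp 0 = (0 : R2) := by
      ext i; fin_cases i <;> simp [perp]
    simp [Kk, h, hp]
  · rw [Kk, norm_smul, norm_perp, Real.norm_eq_abs, abs_of_nonneg (by positivity), sq,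
      mul_inv, mul_assoc, inv_mul_cancel₀ (norm_ne_zero_iff.2 h), mul_one]

lemma Kk_antisymm (x y : R2) : Kk y x = - Kk x y := by
  have h1 : y - x = -(x - y) := by abel
  rw [Kk, Kk, h1, norm_neg, ← perpL_apply, ← perpL_apply, map_neg, smul_neg]

lemma abs_coord_le_norm (w : R2) (i : Fin 2) : |w i| ≤ ‖w‖ := by
  rw [EuclideanSpace.norm_eq, ← Real.sqrt_sq_eq_abs]
  apply Real.sqrt_le_sqrt
  fin_cases i <;> · simp [Fin.sum_univ_two]; positivity

noncomputable def Hone (t : ℝ) : ℝ :=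
  Set.indicator (Set.Icc (-1:ℝ) 1) (fun t => |t| ^ (-(1/2) : ℝ)) t

lemma integrableOn_abs_rpow_Icc01 :
    IntegrableOn (fun t : ℝ => |t| ^ (-(1/2) : ℝ)) (Set.Icc (0:ℝ) 1) := by
  have h : IntegrableOn (fun t : ℝ => t ^ (-(1/2) : ℝ)) (Set.Icc (0:ℝ) 1) := by
    rw [← intervalIntegrable_iff_integrableOn_Icc_of_le zero_le_one]
    exact intervalIntegral.intervalIntegrable_rpow' (by norm_num)
  exact h.congr_fun (fun t ht => by rw [abs_of_nonneg ht.1]) measurableSet_Icc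

lemma integrable_Hone : Integrable Hone := by
  unfold Hone
  rw [integrable_indicator_iff measurableSet_Icc]
  have hsub : Set.Icc (-1:ℝ) 1 ⊆ Set.Icc (-1:ℝ) 0 ∪ Set.Icc 0 1 := by
    intro t ht
    rcases le_total t 0 with h | h
    · exact Or.inl ⟨ht.1, h⟩
    · exact Or.inr ⟨h, ht.2⟩
  apply IntegrableOn.mono_set _ hsub
  apply IntegrableOn.union _ integrableOn_abs_rpow_Icc01
  have := (Measure.measurePreserving_neg (volume : Measure ℝ)).integrableOn_comp_preimage
      (Homeomorph.neg ℝ).measurableEmbedding (s := Set.Icc (0:ℝ) 1)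
      (f := fun t : ℝ => |t| ^ (-(1/2) : ℝ))
  have h2 := this.2 integrableOn_abs_rpow_Icc01
  have hpre : (Neg.neg : ℝ → ℝ) ⁻¹' Set.Icc (0:ℝ) 1 = Set.Icc (-1:ℝ) 0 := by
    ext t; simp only [Set.mem_preimage, Set.mem_Icc]; constructor <;> intro h <;>
      exact ⟨by linarith [h.2], by linarith [h.1]⟩
  rw [hpre] at h2
  exact h2.congr_fun (fun t _ => by simp [Function.comp, abs_neg]) measurableSet_Icc

lemma coord_null (i : Fin 2) : (volume : Measure R2) {y : R2 | y i = 0} = 0 := by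
  have h : {y : R2 | y i = 0} = (LinearMap.ker (EuclideanSpace.projₗ (𝕜 := ℝ) i) : Set R2) := by
    ext y; simp [LinearMap.mem_ker]
  rw [h]
  apply Measure.addHaar_submodule
  rw [Ne, Submodule.eq_top_iff']
  push_neg
  refine ⟨EuclideanSpace.single i 1, ?_⟩
  simp [LinearMap.mem_ker]

lemma integrable_g : Integrable (fun y : R2 => Hone (y 0) * Hone (y 1)) := by
  have h1 : Integrable (fun z : ℝ × ℝ => Hone z.1 * Hone z.2) := by
    rw [MeasureTheory.Measure.volume_eq_prod]
    exact integrable_Hone.mul_prod integrable_Hone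
  have h2 : Integrable (fun f : Fin 2 → ℝ => Hone (f 0) * Hone (f 1)) := by
    have := ((volume_preserving_finTwoArrow ℝ).integrable_comp_emb
      (MeasurableEquiv.finTwoArrow).measurableEmbedding (g := fun z : ℝ × ℝ => Hone z.1 * Hone z.2)).2 h1
    simpa [Function.comp_def, MeasurableEquiv.finTwoArrow] using this
  have := ((EuclideanSpace.volume_preserving_symm_measurableEquiv_toLp (Fin 2)).integrable_comp_emb
    (MeasurableEquiv.toLp 2 (Fin 2 → ℝ)).symm.measurableEmbedding
    (g := fun f : Fin 2 → ℝ => Hone (f 0) * Hone (f 1))).2 h2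
  exact this

lemma integrableOn_inv_norm_ball :
    IntegrableOn (fun y : R2 => ‖y‖⁻¹) (Metric.ball (0 : R2) 1) := by
  apply Integrable.mono' (g := fun y : R2 => Hone (y 0) * Hone (y 1))
      (integrable_g.restrict)
      ((measurable_norm.inv).aestronglyMeasurable)
  have hnull : (volume : Measure R2) ({y : R2 | y 0 = 0} ∪ {y : R2 | y 1 = 0}) = 0 :=
    measure_union_null (coord_null 0) (coord_null 1)
  have hnull' : (volume.restrict (Metric.ball (0:R2) 1))
      ({y : R2 | y 0 = 0} ∪ {y : R2 | y 1 = 0}) = 0 :=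
    le_antisymm (le_trans (Measure.restrict_le_self _) hnull.le) (by simp)
  filter_upwards [ae_restrict_mem measurableSet_ball,
    (MeasureTheory.measure_eq_zero_iff_ae_notMem.1 hnull')] with y hy hy0
  simp only [Set.mem_union, Set.mem_setOf_eq, not_or] at hy0
  obtain ⟨h0, h1⟩ := hy0
  have hylt : ‖y‖ < 1 := by simpa [Metric.mem_ball] using hy
  have ha : (0:ℝ) < |y 0| := abs_pos.2 h0
  have hb : (0:ℝ) < |y 1| := abs_pos.2 h1
  have hmemi : ∀ i, y i ∈ Set.Icc (-1:ℝ) 1 := by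
    intro i
    have := (abs_coord_le_norm y i).trans hylt.le
    constructor <;> [linarith [neg_abs_le (y i)]; linarith [le_abs_self (y i)]]
  have hH : Hone (y 0) * Hone (y 1) = |y 0| ^ (-(1/2):ℝ) * |y 1| ^ (-(1/2):ℝ) := by
    unfold Hone
    rw [Set.indicator_of_mem (hmemi 0), Set.indicator_of_mem (hmemi 1)]
  rw [hH, Real.norm_eq_abs]
  have hysq : ‖y‖ ^ 2 = (y 0) ^ 2 + (y 1) ^ 2 := by
    rw [EuclideanSpace.norm_eq, Real.sq_sqrt (by positivity)]
    simp [Fin.sum_univ_two]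
  have hab : |y 0| * |y 1| ≤ ‖y‖ ^ 2 := by
    rw [hysq]
    nlinarith [abs_nonneg (y 0), abs_nonneg (y 1), sq_abs (y 0), sq_abs (y 1),
      sq_nonneg (|y 0| - |y 1|)]
  have hsqrt : Real.sqrt (|y 0| * |y 1|) ≤ ‖y‖ := by
    rw [show ‖y‖ = Real.sqrt (‖y‖ ^ 2) from (Real.sqrt_sq (norm_nonneg y)).symm]
    exact Real.sqrt_le_sqrt hab
  have hpos : (0:ℝ) < Real.sqrt (|y 0| * |y 1|) := Real.sqrt_pos.2 (by positivity)
  have hinv : ‖y‖⁻¹ ≤ (Real.sqrt (|y 0| * |y 1|))⁻¹ :=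
    inv_anti₀ hpos hsqrt
  have habs : |‖y‖⁻¹| = ‖y‖⁻¹ := abs_of_nonneg (by positivity)
  rw [Pi.inv_apply, habs]
  refine hinv.trans (le_of_eq ?_)
  rw [Real.sqrt_eq_rpow, ← Real.rpow_neg (by positivity),
    Real.mul_rpow (abs_nonneg _) (abs_nonneg _)]

lemma integrableOn_inv_norm_sub_ball (x : R2) :
    IntegrableOn (fun y : R2 => ‖x - y‖⁻¹) (Metric.ball x 1) := by
  have hmp : MeasurePreserving (fun y : R2 => x - y) volume volume :=
    Measure.measurePreserving_sub_left volume x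
  have hemb : MeasurableEmbedding (fun y : R2 => x - y) :=
    (MeasurableEquiv.subLeft x).measurableEmbedding
  have hpre : (fun y : R2 => x - y) ⁻¹' (Metric.ball (0:R2) 1) = Metric.ball x 1 := by
    ext y
    simp [Metric.mem_ball, dist_eq_norm, norm_sub_rev]
  have := (hmp.integrableOn_comp_preimage hemb
    (f := fun y : R2 => ‖y‖⁻¹) (s := Metric.ball (0:R2) 1)).2 integrableOn_inv_norm_ball
  rw [hpre] at this
  exact this

lemma setIntegral_inv_norm_sub_ball (x : R2) :
    ∫ y in Metric.ball x 1, ‖x - y‖⁻¹ = ∫ y in Metric.ball (0:R2) 1, ‖y‖⁻¹ := by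
  have hmp : MeasurePreserving (fun y : R2 => x - y) volume volume :=
    Measure.measurePreserving_sub_left volume x
  have hemb : MeasurableEmbedding (fun y : R2 => x - y) :=
    (MeasurableEquiv.subLeft x).measurableEmbedding
  have hpre : (fun y : R2 => x - y) ⁻¹' (Metric.ball (0:R2) 1) = Metric.ball x 1 := by
    ext y
    simp [Metric.mem_ball, dist_eq_norm, norm_sub_rev]
  have := hmp.setIntegral_preimage_emb hemb (fun y : R2 => ‖y‖⁻¹) (Metric.ball (0:R2) 1)
  rw [hpre] at this
  exact this

section Conv

lemma conv_aux_bound {ρ : R2 → ℝ} {M : ℝ} (hpos : ∀ x, 0 ≤ ρ x)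
    (hbdd : ∀ x, ρ x ≤ M) (x : R2) (y : R2) :
    ρ y * ‖x - y‖⁻¹ ≤
      Set.indicator (Metric.ball x 1) (fun y => M * ‖x - y‖⁻¹) y + ρ y := by
  rcases em (y ∈ Metric.ball x 1) with h | h
  · rw [Set.indicator_of_mem h]
    have : ρ y * ‖x - y‖⁻¹ ≤ M * ‖x - y‖⁻¹ :=
      mul_le_mul_of_nonneg_right (hbdd y) (by positivity)
    linarith [hpos y]
  · rw [Set.indicator_of_notMem h]
    have h1 : (1:ℝ) ≤ ‖x - y‖ := by
      simp only [Metric.mem_ball, dist_eq_norm, not_lt, norm_sub_rev] at h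
      exact h
    have h2 : ‖x - y‖⁻¹ ≤ 1 := inv_le_one_of_one_le₀ h1
    have : ρ y * ‖x - y‖⁻¹ ≤ ρ y * 1 := mul_le_mul_of_nonneg_left h2 (hpos y)
    simp only [mul_one] at this
    linarith

lemma conv_g_integrable {ρ : R2 → ℝ} {M : ℝ} (hint : Integrable ρ) (x : R2) :
    Integrable (fun y : R2 =>
      Set.indicator (Metric.ball x 1) (fun y => M * ‖x - y‖⁻¹) y + ρ y) := by
  apply Integrable.add _ hint
  rw [integrable_indicator_iff measurableSet_ball]
  exact (integrableOn_inv_norm_sub_ball x).const_mul M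

lemma conv_meas {ρ : R2 → ℝ} (hmeas : Measurable ρ) (x : R2) :
    Measurable (fun y : R2 => ρ y * ‖x - y‖⁻¹) :=
  hmeas.mul ((continuous_const.sub continuous_id).norm.measurable.inv)

lemma conv_integrable {ρ : R2 → ℝ} {M : ℝ} (hmeas : Measurable ρ) (hpos : ∀ x, 0 ≤ ρ x)
    (hbdd : ∀ x, ρ x ≤ M) (hint : Integrable ρ) (x : R2) :
    Integrable (fun y : R2 => ρ y * ‖x - y‖⁻¹) := by
  apply Integrable.mono' (conv_g_integrable hint x) (conv_meas hmeas x).aestronglyMeasurable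
  filter_upwards with y
  rw [Real.norm_eq_abs, abs_of_nonneg (mul_nonneg (hpos y) (by positivity))]
  exact conv_aux_bound hpos hbdd x y

lemma conv_bound {ρ : R2 → ℝ} {M : ℝ} (hmeas : Measurable ρ) (hpos : ∀ x, 0 ≤ ρ x)
    (hbdd : ∀ x, ρ x ≤ M) (hint : Integrable ρ) (x : R2) :
    ∫ y, ρ y * ‖x - y‖⁻¹ ≤ M * (∫ y in Metric.ball (0:R2) 1, ‖y‖⁻¹) + ∫ y, ρ y := by
  have h1 : ∫ y, ρ y * ‖x - y‖⁻¹ ≤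
      ∫ y, (Set.indicator (Metric.ball x 1) (fun y => M * ‖x - y‖⁻¹) y + ρ y) :=
    integral_mono (conv_integrable hmeas hpos hbdd hint x) (conv_g_integrable hint x)
      (conv_aux_bound hpos hbdd x)
  refine h1.trans (le_of_eq ?_)
  rw [integral_add _ hint]
  · rw [integral_indicator measurableSet_ball, integral_const_mul,
      setIntegral_inv_norm_sub_ball x]
  · rw [integrable_indicator_iff measurableSet_ball]
    exact (integrableOn_inv_norm_sub_ball x).const_mul M

end Conv

lemma Kk_uncurry_measurable : Measurable (fun p : R2 × R2 => Kk p.1 p.2) := by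
  have h1 : Measurable (fun p : R2 × R2 => (‖p.1 - p.2‖ ^ 2)⁻¹) :=
    ((continuous_fst.sub continuous_snd).norm.pow 2).measurable.inv
  have h2 : Measurable (fun p : R2 × R2 => perp (p.1 - p.2)) := by
    have : Continuous (fun p : R2 × R2 => perpL (p.1 - p.2)) :=
      perpL.continuous.comp (continuous_fst.sub continuous_snd)
    exact this.measurable
  exact h1.smul h2

lemma prod_integrable {ρ : R2 → ℝ} {M : ℝ} (hmeas : Measurable ρ) (hpos : ∀ x, 0 ≤ ρ x)
    (hbdd : ∀ x, ρ x ≤ M) (hint : Integrable ρ)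
    (c : R2 → R2 → (R2 →L[ℝ] ℝ)) (hc : Continuous (fun p : R2 × R2 => c p.1 p.2))
    (B : ℝ) (hB : ∀ x y, ‖c x y‖ ≤ B) :
    Integrable (Function.uncurry fun x y => ρ x * ρ y * (c x y) (Kk x y))
      ((volume : Measure R2).prod volume) := by
  have hB0 : 0 ≤ B := le_trans (norm_nonneg _) (hB 0 0)
  set C : ℝ := M * (∫ y in Metric.ball (0:R2) 1, ‖y‖⁻¹) + ∫ y, ρ y with hC
  -- pointwise bound
  have hptbd : ∀ x y : R2, ‖ρ x * ρ y * (c x y) (Kk x y)‖ ≤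
      (ρ x * B) * (ρ y * ‖x - y‖⁻¹) := by
    intro x y
    have h1 : |(c x y) (Kk x y)| ≤ B * ‖x - y‖⁻¹ := by
      calc |(c x y) (Kk x y)| ≤ ‖c x y‖ * ‖Kk x y‖ := (c x y).le_opNorm _
        _ ≤ B * ‖Kk x y‖ := mul_le_mul_of_nonneg_right (hB x y) (norm_nonneg _)
        _ = B * ‖x - y‖⁻¹ := by rw [norm_Kk]
    have h2 : ‖ρ x * ρ y * (c x y) (Kk x y)‖ = ρ x * ρ y * |(c x y) (Kk x y)| := by
      rw [Real.norm_eq_abs, abs_mul, abs_mul, abs_of_nonneg (hpos x), abs_of_nonneg (hpos y)]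
    rw [h2]
    calc ρ x * ρ y * |(c x y) (Kk x y)| ≤ ρ x * ρ y * (B * ‖x - y‖⁻¹) :=
          mul_le_mul_of_nonneg_left h1 (mul_nonneg (hpos x) (hpos y))
      _ = (ρ x * B) * (ρ y * ‖x - y‖⁻¹) := by ring
  -- measurability
  have heval : Measurable (fun p : R2 × R2 => (c p.1 p.2) (Kk p.1 p.2)) := by
    have hpair : Measurable (fun p : R2 × R2 => ((c p.1 p.2, Kk p.1 p.2) :
        (R2 →L[ℝ] ℝ) × R2)) := hc.measurable.prodMk Kk_uncurry_measurable
    exact (isBoundedBilinearMap_apply.continuous.measurable).comp hpair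
  have mF : AEStronglyMeasurable
      (Function.uncurry fun x y => ρ x * ρ y * (c x y) (Kk x y))
      ((volume : Measure R2).prod volume) := by
    apply Measurable.aestronglyMeasurable
    exact ((hmeas.comp measurable_fst).mul (hmeas.comp measurable_snd)).mul heval
  -- per-x integrability
  have hFx : ∀ x : R2, Integrable (fun y : R2 => ρ x * ρ y * (c x y) (Kk x y)) := by
    intro x
    apply Integrable.mono' ((conv_integrable hmeas hpos hbdd hint x).const_mul (ρ x * B))
    · apply Measurable.aestronglyMeasurable
      have : Measurable (fun y : R2 => (c x y) (Kk x y)) := by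
        have := heval.comp ((measurable_const (a := x)).prodMk measurable_id)
        simpa [Function.comp_def] using this
      exact ((measurable_const.mul hmeas).mul this)
    · filter_upwards with y
      exact hptbd x y
  rw [integrable_prod_iff mF]
  constructor
  · exact Filter.Eventually.of_forall fun x => hFx x
  · apply Integrable.mono' (hint.mul_const (B * C))
    · exact mF.norm.integral_prod_right'
    · filter_upwards with x
      simp only [Function.uncurry_apply_pair]
      have hnn : 0 ≤ ∫ y, ‖ρ x * ρ y * (c x y) (Kk x y)‖ :=
        integral_nonneg fun y => norm_nonneg _
      rw [Real.norm_eq_abs, abs_of_nonneg hnn]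
      have hle : ∫ y, ‖ρ x * ρ y * (c x y) (Kk x y)‖ ≤
          ∫ y, (ρ x * B) * (ρ y * ‖x - y‖⁻¹) :=
        integral_mono (hFx x).norm
          ((conv_integrable hmeas hpos hbdd hint x).const_mul (ρ x * B))
          (fun y => hptbd x y)
      refine hle.trans ?_
      rw [integral_const_mul]
      have h2 : ∫ y, ρ y * ‖x - y‖⁻¹ ≤ C := conv_bound hmeas hpos hbdd hint x
      calc (ρ x * B) * ∫ y, ρ y * ‖x - y‖⁻¹ ≤ (ρ x * B) * C :=
            mul_le_mul_of_nonneg_left h2 (mul_nonneg (hpos x) hB0)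
        _ = ρ x * (B * C) := by ring

lemma hI1' {ρ : R2 → ℝ} {M : ℝ} (hmeas : Measurable ρ) (hpos : ∀ x, 0 ≤ ρ x)
    (hbdd : ∀ x, ρ x ≤ M) (hint : Integrable ρ) (x : R2) :
    Integrable (fun y : R2 => (‖x - y‖ ^ 2)⁻¹ • ρ y • (x - y)) := by
  apply Integrable.mono' (conv_integrable hmeas hpos hbdd hint x)
  · apply Measurable.aestronglyMeasurable
    have h1 : Measurable (fun y : R2 => (‖x - y‖ ^ 2)⁻¹) :=
      ((continuous_const.sub continuous_id).norm.pow 2).measurable.inv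
    have h2 : Measurable (fun y : R2 => ρ y • (x - y)) :=
      hmeas.smul (continuous_const.sub continuous_id).measurable
    exact h1.smul h2
  · filter_upwards with y
    rw [norm_smul, norm_smul, Real.norm_eq_abs, Real.norm_eq_abs,
      abs_of_nonneg (by positivity), abs_of_nonneg (hpos y)]
    rcases eq_or_ne (x - y) 0 with h | h
    · simp [h]
    · rw [sq, mul_inv]
      have hne : ‖x - y‖ ≠ 0 := norm_ne_zero_iff.2 h
      rw [show ‖x - y‖⁻¹ * ‖x - y‖⁻¹ * (ρ y * ‖x - y‖) =
        ρ y * (‖x - y‖⁻¹ * (‖x - y‖⁻¹ * ‖x - y‖)) by ring, inv_mul_cancel₀ hne, mul_one]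

/-- Schochet's symmetrization identity: for a nonnegative, measurable, bounded, integrable
and compactly supported `ρ` with field `E(x) = ∫ ((x−y)/|x−y|²) ρ(y) dy`, and any smooth
compactly supported `Φ`,
`∫ ρ(x) ∇Φ(x)·E^⊥(x) dx = ∫∫ H_Φ(x,y) ρ(x) ρ(y) dx dy` where
`H_Φ(x,y) = (1/2)((x−y)^⊥/|x−y|²)·(∇Φ(x) − ∇Φ(y))`. -/
theorem schochet_symmetrization (ρ : R2 → ℝ) (hmeas : Measurable ρ) (hpos : ∀ x, 0 ≤ ρ x)
    (M : ℝ) (hbdd : ∀ x, ρ x ≤ M) (hint : Integrable ρ) (hsupp : HasCompactSupport ρ)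
    (E : R2 → R2) (hE : ∀ x, E x = ∫ y, (‖x - y‖ ^ 2)⁻¹ • ρ y • (x - y))
    (Φ : R2 → ℝ) (hΦ : ContDiff ℝ (⊤ : ℕ∞) Φ) (hΦsupp : HasCompactSupport Φ) :
    ∫ x, ρ x * fderiv ℝ Φ x (perp (E x))
      = ∫ x, ∫ y,
          ((1 / 2 : ℝ) * (fderiv ℝ Φ x - fderiv ℝ Φ y) ((‖x - y‖ ^ 2)⁻¹ • perp (x - y)))
            * ρ x * ρ y := by
  have hdΦc : Continuous (fderiv ℝ Φ) := hΦ.continuous_fderiv (by simp)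
  obtain ⟨B, hB⟩ := (hΦsupp.fderiv (𝕜 := ℝ)).exists_bound_of_continuous hdΦc
  set F : R2 → R2 → ℝ := fun x y => ρ x * ρ y * (fderiv ℝ Φ x) (Kk x y) with hFdef
  set G : R2 → R2 → ℝ := fun x y => ρ x * ρ y * (fderiv ℝ Φ y) (Kk x y) with hGdef
  have hF : Integrable (Function.uncurry F) ((volume : Measure R2).prod volume) :=
    prod_integrable hmeas hpos hbdd hint (fun x _ => fderiv ℝ Φ x)
      (hdΦc.comp continuous_fst) B (fun x _ => hB x)
  have hG : Integrable (Function.uncurry G) ((volume : Measure R2).prod volume) :=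
    prod_integrable hmeas hpos hbdd hint (fun _ y => fderiv ℝ Φ y)
      (hdΦc.comp continuous_snd) B (fun _ y => hB y)
  -- Step A : LHS = ∫∫ F
  have stepA : ∫ x, ρ x * fderiv ℝ Φ x (perp (E x)) = ∫ x, ∫ y, F x y := by
    apply integral_congr_ae
    filter_upwards with x
    have hI1 := hI1' hmeas hpos hbdd hint x
    have e1 : perp (E x) = ∫ y, perpL ((‖x - y‖ ^ 2)⁻¹ • ρ y • (x - y)) := by
      rw [← perpL_apply, hE x, ContinuousLinearMap.integral_comp_comm perpL hI1]
    have hcomp : Integrable (fun y : R2 => perpL ((‖x - y‖ ^ 2)⁻¹ • ρ y • (x - y))) :=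
      perpL.integrable_comp hI1
    have e2 : fderiv ℝ Φ x (perp (E x))
        = ∫ y, (fderiv ℝ Φ x) (perpL ((‖x - y‖ ^ 2)⁻¹ • ρ y • (x - y))) := by
      rw [e1, ← (fderiv ℝ Φ x).integral_comp_comm hcomp]
    rw [e2, ← integral_const_mul]
    apply integral_congr_ae
    filter_upwards with y
    show ρ x * (fderiv ℝ Φ x) (perpL ((‖x - y‖ ^ 2)⁻¹ • ρ y • (x - y))) = F x y
    have hp : perpL ((‖x - y‖ ^ 2)⁻¹ • ρ y • (x - y))
        = (‖x - y‖ ^ 2)⁻¹ • ρ y • perpL (x - y) := by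
      rw [_root_.map_smul, _root_.map_smul]
    rw [hp]
    simp only [hFdef, Kk, ← perpL_apply, _root_.map_smul, smul_eq_mul]
    ring
  rw [stepA]
  -- Step B : RHS
  have hswap : ∫ x, ∫ y, G x y = - ∫ x, ∫ y, F x y := by
    have h1 : ∫ x, ∫ y, G x y = ∫ y, ∫ x, G x y := integral_integral_swap hG
    rw [h1]
    have h2 : ∫ y, ∫ x, G x y = ∫ x, ∫ y, G y x := rfl
    rw [h2]
    have h3 : ∀ x y : R2, G y x = - F x y := by
      intro x y
      simp only [hFdef, hGdef]
      rw [Kk_antisymm, map_neg]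
      ring
    calc ∫ x, ∫ y, G y x = ∫ x, ∫ y, -(F x y) := by
          apply integral_congr_ae; filter_upwards with x
          apply integral_congr_ae; filter_upwards with y
          exact h3 x y
      _ = - ∫ x, ∫ y, F x y := by rw [← integral_neg]; congr 1; funext x; rw [integral_neg]
  have stepB : ∫ x, ∫ y,
      ((1 / 2 : ℝ) * (fderiv ℝ Φ x - fderiv ℝ Φ y) ((‖x - y‖ ^ 2)⁻¹ • perp (x - y)))
        * ρ x * ρ y
      = (1/2 : ℝ) * (∫ x, ∫ y, F x y) - (1/2 : ℝ) * (∫ x, ∫ y, G x y) := by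
    have hptwise : ∀ x y : R2,
        ((1 / 2 : ℝ) * (fderiv ℝ Φ x - fderiv ℝ Φ y) ((‖x - y‖ ^ 2)⁻¹ • perp (x - y)))
          * ρ x * ρ y = (1/2 : ℝ) * F x y - (1/2 : ℝ) * G x y := by
      intro x y
      have : ((‖x - y‖ ^ 2)⁻¹ • perp (x - y)) = Kk x y := rfl
      rw [this, ContinuousLinearMap.sub_apply]
      simp only [hFdef, hGdef]
      ring
    have e1 : ∫ x, ∫ y,
        ((1 / 2 : ℝ) * (fderiv ℝ Φ x - fderiv ℝ Φ y) ((‖x - y‖ ^ 2)⁻¹ • perp (x - y)))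
          * ρ x * ρ y = ∫ x, ∫ y, ((1/2 : ℝ) * F x y - (1/2 : ℝ) * G x y) := by
      apply integral_congr_ae; filter_upwards with x
      apply integral_congr_ae; filter_upwards with y
      exact hptwise x y
    rw [e1]
    have e2 : ∫ x, ∫ y, ((1/2 : ℝ) * F x y - (1/2 : ℝ) * G x y)
        = ∫ x, ((1/2 : ℝ) * ∫ y, F x y) - ((1/2 : ℝ) * ∫ y, G x y) := by
      apply integral_congr_ae
      filter_upwards [hF.prod_right_ae, hG.prod_right_ae] with x hFx hGx
      simp only [Function.uncurry_apply_pair] at hFx hGx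
      rw [integral_sub (hFx.const_mul _) (hGx.const_mul _), integral_const_mul,
        integral_const_mul]
    rw [e2]
    have hFi : Integrable (fun x => ∫ y, F x y) := hF.integral_prod_left
    have hGi : Integrable (fun x => ∫ y, G x y) := hG.integral_prod_left
    rw [integral_sub (hFi.const_mul _) (hGi.const_mul _), integral_const_mul, integral_const_mul]
  rw [stepB, hswap]
  ring
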